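/- arXiv:1607.00163 — 2 statements merged into one kernel-verified Lean document; each statement's English description precedes it below -/
import Mathlib

section
/- Let Y' be an invertible complex N×N matrix, and suppose complex sequences V[n], V̄[n] ∈ ℂ^N (n ≥ 0) satisfy Y'·V[n] = r₁[n-1] and conj(Y')·V̄[n] = r₂[n-1], where r₁[-1] = -Y₀, r₂[-1] = conj(Y₀) for some fixed Y₀ ∈ ℂ^N, and for n ≥ 1, r₁[n-1]ᵢ = Sᵢ*·W̄ᵢ[n-1] and r₂[n-1]ᵢ = Sᵢ·Wᵢ[n-1], where the sequences W, W̄ are determined by the convolution conditions Σ_{m=0}^{n} Vᵢ[m]Wᵢ[n-m] = δ_{n,0} and Σ_{m=0}^{n} V̄ᵢ[m]W̄ᵢ[n-m] = δ_{n,0}, with Vᵢ[0] ≠ 0 and V̄ᵢ[0] ≠ 0 for all i. Then V̄[n] = conj(V[n]) for all n ≥ 0 (the reflecting condition holds for all power series coefficients). -/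
/-!
Conjugating the recurrences for `V` and `W` shows that `(conj V, conj W)` satisfies the same
recurrences as `(V̄, W̄)`. These determine the coefficients uniquely, degree by degree: the
linear system fixes `V̄[n]` from `W̄[n-1]` because `conj Y'` is invertible, and the convolution
identity fixes `W̄[n]` from `V̄[0..n]` because `V̄[0]` is a unit.
-/

open Matrix Finset

theorem eq_of_sum_range_mul_eq {K : Type*} [Field K] {a a' b b' : ℕ → K} (n : ℕ)
    (ha : a 0 ≠ 0) (haa' : ∀ m ≤ n, a m = a' m)
    (h : ∀ k ≤ n,
      ∑ m ∈ range (k + 1), a m * b (k - m) = ∑ m ∈ range (k + 1), a' m * b' (k - m)) :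
    b n = b' n := by
  induction n using Nat.strong_induction_on with
  | _ n ih =>
    have hlower : ∑ m ∈ range n, a (m + 1) * b (n - (m + 1))
        = ∑ m ∈ range n, a' (m + 1) * b' (n - (m + 1)) := by
      refine sum_congr rfl fun m hm => ?_
      have hmn : m < n := mem_range.mp hm
      rw [haa' (m + 1) hmn, ih (n - (m + 1)) (by omega)
        (fun j hj => haa' j (by omega)) (fun k hk => h k (by omega))]
    have hsplit := h n le_rfl
    rw [sum_range_succ', sum_range_succ', hlower, ← haa' 0 (Nat.zero_le n), add_right_inj,
      Nat.sub_zero] at hsplit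
    exact mul_left_cancel₀ ha hsplit

theorem sum_range_conj_mul_conj_eq_ite {V W : ℕ → ℂ} {n : ℕ}
    (h : ∑ m ∈ range (n + 1), V m * W (n - m) = if n = 0 then 1 else 0) :
    ∑ m ∈ range (n + 1), starRingEnd ℂ (V m) * starRingEnd ℂ (W (n - m))
      = if n = 0 then 1 else 0 := by
  simpa [map_sum, apply_ite (starRingEnd ℂ)] using congrArg (starRingEnd ℂ) h

theorem Matrix.map_mulVec_comp {m n R S : Type*} [Fintype n] [NonAssocSemiring R]
    [NonAssocSemiring S] (f : R →+* S) (M : Matrix m n R) (v : n → R) :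
    M.map f *ᵥ (f ∘ v) = f ∘ (M *ᵥ v) :=
  funext fun i => (RingHom.map_mulVec f M v i).symm

theorem stmt_1_general (N : ℕ) (Y' : Matrix (Fin N) (Fin N) ℂ) (hY : IsUnit Y')
    (Y₀ S : Fin N → ℂ)
    (V Vb W Wb : ℕ → Fin N → ℂ)
    (hV0 : Y'.mulVec (V 0) = -Y₀)
    (hVb0 : (Y'.map (starRingEnd ℂ)).mulVec (Vb 0) = -(fun i => starRingEnd ℂ (Y₀ i)))
    (hVn : ∀ n ≥ 1, Y'.mulVec (V n) = fun i => starRingEnd ℂ (S i) * Wb (n - 1) i)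
    (hVbn : ∀ n ≥ 1, (Y'.map (starRingEnd ℂ)).mulVec (Vb n) = fun i => S i * W (n - 1) i)
    (hW : ∀ n, ∀ i, ∑ m ∈ Finset.range (n + 1), V m i * W (n - m) i
        = if n = 0 then 1 else 0)
    (hWb : ∀ n, ∀ i, ∑ m ∈ Finset.range (n + 1), Vb m i * Wb (n - m) i
        = if n = 0 then 1 else 0)
    (hVb0ne : ∀ i, Vb 0 i ≠ 0) :
    ∀ n, Vb n = fun i => starRingEnd ℂ (V n i) := by
  have hinj : Function.Injective (Y'.map (starRingEnd ℂ)).mulVec :=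
    mulVec_injective_of_isUnit (hY.map (starRingEnd ℂ).mapMatrix)
  intro n
  induction n using Nat.strong_induction_on with
  | _ n ih =>
    apply hinj
    change _ = Y'.map (starRingEnd ℂ) *ᵥ (starRingEnd ℂ ∘ V n)
    rw [Matrix.map_mulVec_comp]
    rcases Nat.eq_zero_or_pos n with rfl | hn
    · rw [hVb0, hV0]
      ext i
      simp
    · have hWb_conj (i : Fin N) : Wb (n - 1) i = starRingEnd ℂ (W (n - 1) i) :=
        eq_of_sum_range_mul_eq (b := (Wb · i)) (b' := fun k => starRingEnd ℂ (W k i)) (n - 1)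
          (hVb0ne i) (fun m hm => congrFun (ih m (by omega)) i) fun k _ => (hWb k i).trans
            (sum_range_conj_mul_conj_eq_ite (V := (V · i)) (W := (W · i)) (hW k i)).symm
      rw [hVbn n hn, hVn n hn]
      ext i
      simp [hWb_conj]

/-- Reflecting condition for all HELM power-series coefficients in the PQ-only case. -/
theorem stmt_1 (N : ℕ) (Y' : Matrix (Fin N) (Fin N) ℂ) (hY : IsUnit Y')
    (Y₀ S : Fin N → ℂ)
    (V Vb W Wb : ℕ → Fin N → ℂ)
    (hV0 : Y'.mulVec (V 0) = -Y₀)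
    (hVb0 : (Y'.map (starRingEnd ℂ)).mulVec (Vb 0) = -(fun i => starRingEnd ℂ (Y₀ i)))
    (hVn : ∀ n ≥ 1, Y'.mulVec (V n) = fun i => starRingEnd ℂ (S i) * Wb (n - 1) i)
    (hVbn : ∀ n ≥ 1, (Y'.map (starRingEnd ℂ)).mulVec (Vb n) = fun i => S i * W (n - 1) i)
    (hW : ∀ n, ∀ i, ∑ m ∈ Finset.range (n + 1), V m i * W (n - m) i
        = if n = 0 then 1 else 0)
    (hWb : ∀ n, ∀ i, ∑ m ∈ Finset.range (n + 1), Vb m i * Wb (n - m) i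
        = if n = 0 then 1 else 0)
    (hV0ne : ∀ i, V 0 i ≠ 0) (hVb0ne : ∀ i, Vb 0 i ≠ 0) :
    ∀ n, Vb n = fun i => starRingEnd ℂ (V n i) :=
  stmt_1_general N Y' hY Y₀ S V Vb W Wb hV0 hVb0 hVn hVbn hW hWb hVb0ne
end

section
/- Let Y be an (N+1)×(N+1) complex symmetric matrix with zero row sums (Σ_k Y_{ik} = 0 for all i), and let Y' be obtained by deleting row and column 0. If the weighted graph on vertices {0,…,N} with edge weights -Y_{ik} (for i ≠ k, Y_{ik} ≠ 0) is connected and all off-diagonal entries Y_{ik} have nonzero negative real part times -1 (i.e., the edge admittances have positive real conductance), then Y' is invertible. -/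
/-!
If the reduced matrix kills `v`, then `x = (0, v)` satisfies `xᴴ Y x = 0`. Symmetry and zero row
sums turn `-2 xᴴ Y x` into `∑ᵢₖ Yᵢₖ |xₖ - xᵢ|²`, whose real part is a sum of nonpositive terms, so
`x` takes equal values at the two ends of every edge. By connectivity `x` is constant, and
`x 0 = 0` forces `v = 0`.
-/

open Matrix Complex Finset

namespace Matrix

variable {ι R : Type*} [Fintype ι]

theorem mulVec_apply_eq_sum_mul_sub [Ring R] {Y : Matrix ι ι R} (hrow : ∀ i, ∑ k, Y i k = 0)
    (x : ι → R) (i : ι) : (Y *ᵥ x) i = ∑ k, Y i k * (x k - x i) := by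
  simp only [mul_sub, sum_sub_distrib, ← sum_mul, hrow, zero_mul, sub_zero, mulVec, dotProduct]

theorem sum_mul_star_sub_mul_sub [CommRing R] [StarRing R] {Y : Matrix ι ι R} (hsymm : Y.IsSymm)
    (hrow : ∀ i, ∑ k, Y i k = 0) (x : ι → R) :
    ∑ i, ∑ k, Y i k * (star (x k - x i) * (x k - x i)) = -2 * (star x ⬝ᵥ Y *ᵥ x) := by
  have hform : star x ⬝ᵥ Y *ᵥ x = ∑ i, ∑ k, Y i k * (star (x i) * (x k - x i)) := by
    simp only [dotProduct, mulVec_apply_eq_sum_mul_sub hrow, Pi.star_apply, mul_sum]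
    exact sum_congr rfl fun i _ => sum_congr rfl fun k _ => by ring
  have hswap : ∑ i, ∑ k, Y i k * (star (x k) * (x k - x i)) = -(star x ⬝ᵥ Y *ᵥ x) := by
    rw [sum_comm, hform, ← sum_neg_distrib]
    refine sum_congr rfl fun i _ => ?_
    rw [← sum_neg_distrib]
    refine sum_congr rfl fun k _ => ?_
    rw [hsymm.apply k i]
    ring
  calc ∑ i, ∑ k, Y i k * (star (x k - x i) * (x k - x i))
      = ∑ i, ∑ k, Y i k * (star (x k) * (x k - x i))
        - ∑ i, ∑ k, Y i k * (star (x i) * (x k - x i)) := by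
        simp only [← sum_sub_distrib, star_sub]
        exact sum_congr rfl fun i _ => sum_congr rfl fun k _ => by ring
    _ = -2 * (star x ⬝ᵥ Y *ᵥ x) := by rw [hswap, ← hform]; ring

theorem apply_eq_of_star_dotProduct_mulVec_eq_zero {Y : Matrix ι ι ℂ} (hsymm : Y.IsSymm)
    (hrow : ∀ i, ∑ k, Y i k = 0) (hoff : ∀ i k, i ≠ k → Y i k ≠ 0 → 0 < (-(Y i k)).re)
    {x : ι → ℂ} (hx : star x ⬝ᵥ Y *ᵥ x = 0) {i k : ι} (hik : i ≠ k) (hY : Y i k ≠ 0) :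
    x i = x k := by
  have hsum := sum_mul_star_sub_mul_sub hsymm hrow x
  rw [hx, mul_zero] at hsum
  have hre : ∑ i, ∑ k, (-(Y i k)).re * normSq (x k - x i) = 0 := by
    simp_rw [star_def, ← normSq_eq_conj_mul_self] at hsum
    simpa [re_sum] using congrArg re hsum
  have hterm : ∀ i k, 0 ≤ (-(Y i k)).re * normSq (x k - x i) := by
    intro i k
    by_cases hik : i = k
    · simp [hik]
    by_cases hY : Y i k = 0
    · simp [hY]
    exact mul_nonneg (hoff i k hik hY).le (normSq_nonneg _)
  have hsum_i := (sum_eq_zero_iff_of_nonneg fun i _ => sum_nonneg fun k _ => hterm i k).1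
    hre i (mem_univ _)
  have hik_zero := (sum_eq_zero_iff_of_nonneg fun k _ => hterm i k).1 hsum_i k (mem_univ _)
  rw [mul_eq_zero, or_iff_right (hoff i k hik hY).ne', normSq_eq_zero, sub_eq_zero] at hik_zero
  exact hik_zero.symm

theorem vecCons_zero_dotProduct_mulVec_vecCons_zero [NonUnitalNonAssocSemiring R] {n : ℕ}
    (Y : Matrix (Fin (n + 1)) (Fin (n + 1)) R) (u v : Fin n → R) :
    vecCons 0 u ⬝ᵥ Y *ᵥ vecCons 0 v = u ⬝ᵥ Y.submatrix Fin.succ Fin.succ *ᵥ v := by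
  simp [dotProduct, mulVec, Fin.sum_univ_succ]

end Matrix

/-- The reduced admittance matrix of a connected network with zero row sums and
branch admittances of positive real conductance is invertible. -/
theorem stmt_7 (N : ℕ) (Y : Matrix (Fin (N + 1)) (Fin (N + 1)) ℂ)
    (hsymm : Y.IsSymm)
    (hrow : ∀ i, ∑ k, Y i k = 0)
    (hoff : ∀ i k, i ≠ k → Y i k ≠ 0 → 0 < (-(Y i k)).re)
    (hconn : ∀ i k : Fin (N + 1),
      Relation.ReflTransGen (fun a b => a ≠ b ∧ Y a b ≠ 0) i k) :
    IsUnit (Y.submatrix Fin.succ Fin.succ) := by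
  rw [isUnit_iff_isUnit_det, isUnit_iff_ne_zero, Ne, ← exists_mulVec_eq_zero_iff]
  rintro ⟨v, hv0, hv⟩
  set x : Fin (N + 1) → ℂ := vecCons 0 v
  have hx : star x ⬝ᵥ Y *ᵥ x = 0 := by
    have hstar : star x = vecCons 0 (star v) :=
      funext fun i => Fin.cases (by simp [x]) (by simp [x]) i
    rw [hstar, vecCons_zero_dotProduct_mulVec_vecCons_zero, hv, dotProduct_zero]
  have hconst (i : Fin (N + 1)) : x 0 = x i := by
    simpa only [Relation.reflTransGen_eq_self] using (hconn 0 i).lift x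
      fun a b hab => apply_eq_of_star_dotProduct_mulVec_eq_zero hsymm hrow hoff hx hab.1 hab.2
  exact hv0 (funext fun j => by simpa [x] using (hconst j.succ).symm)
end
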